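/- For any finite type σ over Ω and any sequence of countable ordinals (α_ξ)_{ξ<ζ} indexed by a countable ordinal ζ ≥ 1, if μ < ζ is such that limsup_{ξ→ζ} α_ξ = sup_{μ≤ξ<ζ} α_ξ, then limsup_{ξ→ζ} Iter_{α_ξ}^σ =hp sup_{μ≤ξ<ζ} Iter_{α_ξ}^σ. -/

import Mathlib

/-!  Framework: finite type structure over Ω = countable ordinals,
     limsup/liminf, transfinite iteration functionals, hereditarily
     positive and hereditarily monotone functionals. -/

noncomputable section
namespace IterOrd

open Ordinal

theorem omega1_pos : (0 : Ordinal) < ω₁ := Ordinal.omega0_pos.trans Ordinal.omega0_lt_omega_one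

/-- `Om` is Ω, the set of countable ordinals (ordinals `< ω₁`). -/
abbrev Om : Type 1 := {o : Ordinal // o < ω₁}

/-- Infimum of a subset of Ω (the minimum for nonempty sets; `0` for `∅`). -/
def infOm (s : Set Om) : Om :=
  ⟨sInf (Subtype.val '' s), by
    rcases (Subtype.val '' s).eq_empty_or_nonempty with h | h
    · rw [h]; simpa using omega1_pos
    · obtain ⟨x, _, he⟩ := csInf_mem h
      exact he ▸ x.2⟩

/-- Supremum of a subset of Ω.  Whenever the supremum of the set exists in Ω
(in particular for every countable subset, by regularity of `ω₁`) this is the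
genuine supremum; otherwise it takes a junk value. -/
def supOm (s : Set Om) : Om :=
  if h : sSup (Subtype.val '' s) < ω₁ then ⟨sSup (Subtype.val '' s), h⟩ else ⟨0, omega1_pos⟩

/-- Finite types over the base type `o` (interpreted as Ω). -/
inductive Ty : Type
  | base : Ty
  | arrow : Ty → Ty → Ty
deriving DecidableEq

/-- The full type structure over Ω: `El base = Ω` and
`El (arrow σ τ)` is the set of all functions `El σ → El τ`. -/
@[reducible] def El : Ty → Type 1
  | .base => Om
  | .arrow σ τ => El σ → El τ

/-- The order on each `El σ`: the ordinal order at base type, pointwise at arrow types. -/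
def Le : (σ : Ty) → El σ → El σ → Prop
  | .base => fun x y => x ≤ y
  | .arrow σ τ => fun f g => ∀ x : El σ, Le τ (f x) (g x)

/-- Suprema, computed pointwise at function types. -/
def supEl : (σ : Ty) → Set (El σ) → El σ
  | .base => supOm
  | .arrow σ τ => fun S (x : El σ) => supEl τ ((fun f : El (.arrow σ τ) => f x) '' S)

/-- Infima, computed pointwise at function types. -/
def infEl : (σ : Ty) → Set (El σ) → El σ
  | .base => infOm
  | .arrow σ τ => fun S (x : El σ) => infEl τ ((fun f : El (.arrow σ τ) => f x) '' S)

/-- `limsup_{ξ→ζ} f ξ = inf_{γ<ζ} sup_{γ≤ξ<ζ} f ξ`. -/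
def limsupEl (σ : Ty) (ζ : Ordinal) (f : ∀ ξ : Ordinal, ξ < ζ → El σ) : El σ :=
  infEl σ {y | ∃ γ, ∃ _ : γ < ζ, y = supEl σ {z | ∃ ξ, ∃ h : ξ < ζ, γ ≤ ξ ∧ z = f ξ h}}

/-- `liminf_{ξ→ζ} f ξ = sup_{γ<ζ} inf_{γ≤ξ<ζ} f ξ`. -/
def liminfEl (σ : Ty) (ζ : Ordinal) (f : ∀ ξ : Ordinal, ξ < ζ → El σ) : El σ :=
  supEl σ {y | ∃ γ, ∃ _ : γ < ζ, y = infEl σ {z | ∃ ξ, ∃ h : ξ < ζ, γ ≤ ξ ∧ z = f ξ h}}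

/-- `limsup` of a ζ-indexed sequence of ordinals. -/
def oLimsup (ζ : Ordinal) (a : Ordinal → Ordinal) : Ordinal :=
  sInf {s | ∃ γ, γ < ζ ∧ s = sSup (a '' {ξ | γ ≤ ξ ∧ ξ < ζ})}

/-- `liminf` of a ζ-indexed sequence of ordinals. -/
def oLiminf (ζ : Ordinal) (a : Ordinal → Ordinal) : Ordinal :=
  sSup {s | ∃ γ, γ < ζ ∧ s = sInf (a '' {ξ | γ ≤ ξ ∧ ξ < ζ})}

/-- The α-iteration functional of type σ:
`Iter 0 f x = x`, `Iter (α+1) f x = f (Iter α f x)`, and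
`Iter μ f x = limsup_{ξ→μ} Iter ξ f x` for limit μ. -/
def Iter (σ : Ty) (α : Ordinal) : (El σ → El σ) → El σ → El σ :=
  Ordinal.limitRecOn (motive := fun _ => (El σ → El σ) → El σ → El σ) α
    (fun _ x => x)
    (fun _ ih f x => f (ih f x))
    (fun μ _ ih f x => limsupEl σ μ (fun ξ h => ih ξ h f x))

/-- The pair (hereditarily positive, ≤hp), defined simultaneously by recursion on the type.
Every element of `Ω` and of `Ω_{ρ→τ}` with `ρ ≠ τ` is h.p., and `≤hp` there is `≤`;
`f : Ω_{τ→τ}` is h.p. iff it preserves h.p., is inflationary on h.p. arguments and is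
monotone (w.r.t. `≤hp`) on h.p. arguments; `f ≤hp f'` on `Ω_{τ→τ}` iff `f x ≤hp f' x`
for every h.p. `x`. -/
def HPaux : (σ : Ty) → (El σ → Prop) × (El σ → El σ → Prop)
  | .base => ⟨fun _ => True, fun x y => x ≤ y⟩
  | .arrow ρ τ =>
      ⟨fun f =>
        if h : ρ = τ then
          (∀ x, (HPaux ρ).1 x → (HPaux τ).1 (f x)) ∧
          (∀ x, (HPaux ρ).1 x → (HPaux τ).2 (cast (congrArg El h) x) (f x)) ∧
          (∀ x y, (HPaux ρ).1 x → (HPaux ρ).1 y → (HPaux ρ).2 x y → (HPaux τ).2 (f x) (f y))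
        else True,
       fun f g =>
        if ρ = τ then ∀ x, (HPaux ρ).1 x → (HPaux τ).2 (f x) (g x)
        else Le (.arrow ρ τ) f g⟩

/-- Hereditarily positive functionals. -/
def Hp (σ : Ty) : El σ → Prop := (HPaux σ).1

/-- The order `≤hp`. -/
def HpLe (σ : Ty) : El σ → El σ → Prop := (HPaux σ).2

/-- `f =hp g` iff `f ≤hp g` and `g ≤hp f`. -/
def HpEq (σ : Ty) (f g : El σ) : Prop := HpLe σ f g ∧ HpLe σ g f

/-- The pair (hereditarily monotone, ≤ on the hereditarily monotone structure),
by recursion on the type.  `f` is hereditarily monotone iff it maps hereditarily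
monotone arguments to hereditarily monotone values, monotonically; the order is
pointwise over hereditarily monotone arguments (i.e. the order of `Ω^mon`). -/
def HMaux : (σ : Ty) → (El σ → Prop) × (El σ → El σ → Prop)
  | .base => ⟨fun _ => True, fun x y => x ≤ y⟩
  | .arrow σ τ =>
      ⟨fun f =>
        (∀ x, (HMaux σ).1 x → (HMaux τ).1 (f x)) ∧
        (∀ x y, (HMaux σ).1 x → (HMaux σ).1 y → (HMaux σ).2 x y → (HMaux τ).2 (f x) (f y)),
       fun f g => ∀ x, (HMaux σ).1 x → (HMaux τ).2 (f x) (g x)⟩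

/-- Hereditarily monotone functionals: the members of the type structure `Ω^mon`. -/
def HM (σ : Ty) : El σ → Prop := (HMaux σ).1

/-- The (pointwise) order of the hereditarily monotone type structure `Ω^mon`. -/
def LeHM (σ : Ty) : El σ → El σ → Prop := (HMaux σ).2

/-- Equality in the hereditarily monotone type structure `Ω^mon`. -/
def EqHM (σ : Ty) (f g : El σ) : Prop := LeHM σ f g ∧ LeHM σ g f

/-!
The argument needs only two properties of the family `F α := Iter_α f x` (for h.p. `f`, `x`):
it is `≤hp`-monotone on countable ordinals, and `F β = limsup_{η→β} F η` at limits `β`.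
For such a family, `F β ≤hp sup_{γ≤ξ<ζ} F α_ξ` as soon as `β ≤ sup_{γ≤ξ<ζ} α_ξ`: either
`β ≤ α_ξ` for some `ξ ≥ γ`, or `β` is that supremum, is not attained, hence is a limit, and
`F β ≤ sup_{η<β} F η`. Every `α_ξ` with `ξ ≥ μ` is at most the limsup, hence at most every
tail supremum `sup_{γ≤ξ<ζ} α_ξ`, so `sup_{μ≤ξ<ζ} F α_ξ` lies `≤hp`-below every tail supremum
of the `F α_ξ` and thus below their infimum; the reverse inequality is the term `γ = μ` of
that infimum. All operations are pointwise, so this lifts to the functionals `Iter_α`.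
-/

theorem sSup_lt_omega_one {s : Set Ordinal} (hs : s.Countable) (h : ∀ o ∈ s, o < ω₁) :
    sSup s < ω₁ := by
  have := hs.to_subtype
  rw [sSup_eq_iSup']
  exact Ordinal.iSup_lt_omega_one fun o => h o o.2

theorem countable_Iio_of_lt_omega_one {ζ : Ordinal} (hζ : ζ < ω₁) : (Set.Iio ζ).Countable := by
  rw [← Cardinal.le_aleph0_iff_set_countable, Cardinal.mk_Iio_ordinal, Cardinal.lift_le_aleph0,
    ← Cardinal.lt_aleph_one_iff, ← Cardinal.lt_ord, Cardinal.ord_aleph]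
  exact hζ

section Om

variable {s : Set Om}

theorem le_supOm (hs : s.Countable) {x : Om} (hx : x ∈ s) : x ≤ supOm s := by
  have hlt : sSup (Subtype.val '' s) < ω₁ :=
    sSup_lt_omega_one (hs.image _) (by rintro _ ⟨y, -, rfl⟩; exact y.2)
  rw [supOm, dif_pos hlt, ← Subtype.coe_le_coe]
  exact le_csSup ⟨ω₁, by rintro _ ⟨y, -, rfl⟩; exact y.2.le⟩ ⟨x, hx, rfl⟩

theorem supOm_le {b : Om} (hb : ∀ x ∈ s, x ≤ b) : supOm s ≤ b := by
  rw [supOm, ← Subtype.coe_le_coe]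
  split
  · exact csSup_le' (by rintro _ ⟨y, hy, rfl⟩; exact hb y hy)
  · exact zero_le

theorem infOm_le {x : Om} (hx : x ∈ s) : infOm s ≤ x :=
  Subtype.coe_le_coe.1 (csInf_le (OrderBot.bddBelow _) ⟨x, hx, rfl⟩)

theorem le_infOm (hne : s.Nonempty) {b : Om} (hb : ∀ x ∈ s, b ≤ x) : b ≤ infOm s :=
  Subtype.coe_le_coe.1 (le_csInf (hne.image _) (by rintro _ ⟨y, hy, rfl⟩; exact hb y hy))

end Om

section Le

theorem Le.refl : ∀ {σ : Ty} (x : El σ), Le σ x x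
  | .base, x => le_refl x
  | .arrow _ _, f => fun y => Le.refl (f y)

theorem Le.trans : ∀ {σ : Ty} {x y z : El σ}, Le σ x y → Le σ y z → Le σ x z
  | .base, _, _, _, h₁, h₂ => le_trans h₁ h₂
  | .arrow _ _, _, _, _, h₁, h₂ => fun w => Le.trans (h₁ w) (h₂ w)

theorem le_supEl : ∀ {σ : Ty} {s : Set (El σ)}, s.Countable → ∀ {x}, x ∈ s → Le σ x (supEl σ s)
  | .base, _, hs, _, hx => le_supOm hs hx
  | .arrow _ _, _, hs, f, hf => fun _ => le_supEl (hs.image _) ⟨f, hf, rfl⟩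

theorem supEl_le : ∀ {σ : Ty} {s : Set (El σ)} {b : El σ}, (∀ x ∈ s, Le σ x b) →
    Le σ (supEl σ s) b
  | .base, _, _, hb => supOm_le hb
  | .arrow _ _, _, b, hb => fun y => supEl_le (b := b y) (by rintro _ ⟨g, hg, rfl⟩; exact hb g hg y)

theorem infEl_le : ∀ {σ : Ty} {s : Set (El σ)} {x}, x ∈ s → Le σ (infEl σ s) x
  | .base, _, _, hx => infOm_le hx
  | .arrow _ _, _, f, hf => fun _ => infEl_le ⟨f, hf, rfl⟩

theorem le_infEl : ∀ {σ : Ty} {s : Set (El σ)} {b : El σ}, s.Nonempty → (∀ x ∈ s, Le σ b x) →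
    Le σ b (infEl σ s)
  | .base, _, _, hne, hb => le_infOm hne hb
  | .arrow _ _, _, b, hne, hb => fun y =>
      le_infEl (b := b y) (hne.image _) (by rintro _ ⟨g, hg, rfl⟩; exact hb g hg y)

end Le

section Hp

theorem hp_arrow {σ : Ty} {f : El (.arrow σ σ)} :
    Hp (.arrow σ σ) f ↔
      (∀ x, Hp σ x → Hp σ (f x)) ∧ (∀ x, Hp σ x → HpLe σ x (f x)) ∧
      (∀ x y, Hp σ x → Hp σ y → HpLe σ x y → HpLe σ (f x) (f y)) := by
  simp [Hp, HPaux, HpLe]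

theorem hp_arrow_of_ne {ρ τ : Ty} (h : ρ ≠ τ) (f : El (.arrow ρ τ)) : Hp (.arrow ρ τ) f := by
  simp [Hp, HPaux, h]

theorem hpLe_arrow {σ : Ty} {f g : El (.arrow σ σ)} :
    HpLe (.arrow σ σ) f g ↔ ∀ x, Hp σ x → HpLe σ (f x) (g x) := by
  simp [HpLe, HPaux, Hp]

theorem hpLe_arrow_of_ne {ρ τ : Ty} (h : ρ ≠ τ) {f g : El (.arrow ρ τ)} :
    HpLe (.arrow ρ τ) f g ↔ Le (.arrow ρ τ) f g := by
  simp [HpLe, HPaux, h]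

theorem hpEq_arrow {σ : Ty} {f g : El (.arrow σ σ)} :
    HpEq (.arrow σ σ) f g ↔ ∀ x, Hp σ x → HpEq σ (f x) (g x) := by
  refine ⟨fun h x hx => ⟨hpLe_arrow.1 h.1 x hx, hpLe_arrow.1 h.2 x hx⟩, fun h => ?_⟩
  exact ⟨hpLe_arrow.2 fun x hx => (h x hx).1, hpLe_arrow.2 fun x hx => (h x hx).2⟩

theorem Le.hpLe {σ : Ty} {x y : El σ} (h : Le σ x y) : HpLe σ x y := by
  induction σ with
  | base => exact h
  | arrow ρ τ _ ihτ =>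
    by_cases hρτ : ρ = τ
    · subst hρτ
      exact hpLe_arrow.2 fun z _ => ihτ (h z)
    · exact (hpLe_arrow_of_ne hρτ).2 h

theorem HpLe.refl {σ : Ty} (x : El σ) : HpLe σ x x := (Le.refl x).hpLe

theorem HpLe.trans {σ : Ty} {x y z : El σ} (h₁ : HpLe σ x y) (h₂ : HpLe σ y z) :
    HpLe σ x z := by
  induction σ with
  | base => exact le_trans h₁ h₂
  | arrow ρ τ _ ihτ =>
    by_cases hρτ : ρ = τ
    · subst hρτ
      rw [hpLe_arrow] at *
      exact fun w hw => ihτ (h₁ w hw) (h₂ w hw)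
    · rw [hpLe_arrow_of_ne hρτ] at *
      exact h₁.trans h₂

theorem hpLe_supEl {σ : Ty} {s : Set (El σ)} (hs : s.Countable) {x : El σ} (hx : x ∈ s) :
    HpLe σ x (supEl σ s) :=
  (le_supEl hs hx).hpLe

theorem supEl_hpLe {σ : Ty} {s : Set (El σ)} {b : El σ} (hb : ∀ x ∈ s, HpLe σ x b) :
    HpLe σ (supEl σ s) b := by
  induction σ with
  | base => exact supOm_le hb
  | arrow ρ τ _ ihτ =>
    by_cases hρτ : ρ = τ
    · subst hρτ
      exact hpLe_arrow.2 fun y hy =>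
        ihτ (by rintro _ ⟨g, hg, rfl⟩; exact hpLe_arrow.1 (hb g hg) y hy)
    · exact (hpLe_arrow_of_ne hρτ).2 (supEl_le fun x hx => (hpLe_arrow_of_ne hρτ).1 (hb x hx))

theorem hpLe_infEl {σ : Ty} {s : Set (El σ)} {b : El σ} (hne : s.Nonempty)
    (hb : ∀ x ∈ s, HpLe σ b x) : HpLe σ b (infEl σ s) := by
  induction σ with
  | base => exact le_infOm hne hb
  | arrow ρ τ _ ihτ =>
    by_cases hρτ : ρ = τ
    · subst hρτ
      exact hpLe_arrow.2 fun y hy =>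
        ihτ (hne.image _) (by rintro _ ⟨g, hg, rfl⟩; exact hpLe_arrow.1 (hb g hg) y hy)
    · exact (hpLe_arrow_of_ne hρτ).2
        (le_infEl hne fun x hx => (hpLe_arrow_of_ne hρτ).1 (hb x hx))

theorem hp_supEl {σ : Ty} {s : Set (El σ)} (hs : s.Countable) (hne : s.Nonempty)
    (hhp : ∀ x ∈ s, Hp σ x) : Hp σ (supEl σ s) := by
  cases σ with
  | base => trivial
  | arrow ρ τ =>
    by_cases hρτ : ρ = τ
    · subst hρτ
      obtain ⟨g₀, hg₀⟩ := hne
      refine hp_arrow.2 ⟨fun x hx => ?_, fun x hx => ?_, fun x y hx hy hxy => ?_⟩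
      · exact hp_supEl (hs.image _) ⟨g₀ x, g₀, hg₀, rfl⟩
          (by rintro _ ⟨g, hg, rfl⟩; exact (hp_arrow.1 (hhp g hg)).1 x hx)
      · exact ((hp_arrow.1 (hhp g₀ hg₀)).2.1 x hx).trans (hpLe_supEl (hs.image _) ⟨g₀, hg₀, rfl⟩)
      · refine supEl_hpLe ?_
        rintro _ ⟨g, hg, rfl⟩
        exact ((hp_arrow.1 (hhp g hg)).2.2 x y hx hy hxy).trans
          (hpLe_supEl (hs.image _) ⟨g, hg, rfl⟩)
    · exact hp_arrow_of_ne hρτ _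

theorem hp_infEl {σ : Ty} {s : Set (El σ)} (hne : s.Nonempty) (hhp : ∀ x ∈ s, Hp σ x) :
    Hp σ (infEl σ s) := by
  cases σ with
  | base => trivial
  | arrow ρ τ =>
    by_cases hρτ : ρ = τ
    · subst hρτ
      refine hp_arrow.2 ⟨fun x hx => ?_, fun x hx => ?_, fun x y hx hy hxy => ?_⟩
      · exact hp_infEl (hne.image _)
          (by rintro _ ⟨g, hg, rfl⟩; exact (hp_arrow.1 (hhp g hg)).1 x hx)
      · refine hpLe_infEl (hne.image _) ?_
        rintro _ ⟨g, hg, rfl⟩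
        exact (hp_arrow.1 (hhp g hg)).2.1 x hx
      · refine hpLe_infEl (hne.image _) ?_
        rintro _ ⟨g, hg, rfl⟩
        have hinf : Le ρ (infEl ρ ((· x) '' s)) (g x) := infEl_le ⟨g, hg, rfl⟩
        exact hinf.hpLe.trans ((hp_arrow.1 (hhp g hg)).2.2 x y hx hy hxy)
    · exact hp_arrow_of_ne hρτ _

end Hp

section Tail

variable {ζ γ : Ordinal}

def tail (σ : Ty) (ζ γ : Ordinal) (f : ∀ ξ : Ordinal, ξ < ζ → El σ) : Set (El σ) :=
  {z | ∃ ξ, ∃ h : ξ < ζ, γ ≤ ξ ∧ z = f ξ h}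

theorem countable_tail {σ : Ty} (hζ : ζ < ω₁) (f : ∀ ξ : Ordinal, ξ < ζ → El σ) :
    (tail σ ζ γ f).Countable := by
  have := (countable_Iio_of_lt_omega_one hζ).to_subtype
  refine Set.Countable.mono ?_ (Set.countable_range fun ξ : Set.Iio ζ => f ξ ξ.2)
  rintro _ ⟨ξ, hξ, -, rfl⟩
  exact ⟨⟨ξ, hξ⟩, rfl⟩

theorem supEl_tail_apply {ρ τ : Ty} (F : ∀ ξ : Ordinal, ξ < ζ → El (.arrow ρ τ)) (x : El ρ) :
    supEl (.arrow ρ τ) (tail _ ζ γ F) x = supEl τ (tail τ ζ γ fun ξ h => F ξ h x) := by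
  show supEl τ _ = _
  congr 1
  ext z
  constructor
  · rintro ⟨_, ⟨ξ, hξ, hγξ, rfl⟩, rfl⟩
    exact ⟨ξ, hξ, hγξ, rfl⟩
  · rintro ⟨ξ, hξ, hγξ, rfl⟩
    exact ⟨F ξ hξ, ⟨ξ, hξ, hγξ, rfl⟩, rfl⟩

theorem limsupEl_apply {ρ τ : Ty} (F : ∀ ξ : Ordinal, ξ < ζ → El (.arrow ρ τ)) (x : El ρ) :
    limsupEl (.arrow ρ τ) ζ F x = limsupEl τ ζ fun ξ h => F ξ h x := by
  show infEl τ _ = infEl τ _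
  congr 1
  ext y
  constructor
  · rintro ⟨_, ⟨γ, hγ, rfl⟩, rfl⟩
    exact ⟨γ, hγ, supEl_tail_apply (γ := γ) F x⟩
  · rintro ⟨γ, hγ, rfl⟩
    exact ⟨_, ⟨γ, hγ, rfl⟩, supEl_tail_apply (γ := γ) F x⟩

variable {σ : Ty} {f : ∀ ξ : Ordinal, ξ < ζ → El σ}

theorem limsupEl_le_supEl_tail (hγ : γ < ζ) : Le σ (limsupEl σ ζ f) (supEl σ (tail σ ζ γ f)) :=
  infEl_le ⟨γ, hγ, rfl⟩

theorem hpLe_limsupEl (hζ : 0 < ζ) {b : El σ} (hb : ∀ γ < ζ, HpLe σ b (supEl σ (tail σ ζ γ f))) :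
    HpLe σ b (limsupEl σ ζ f) :=
  hpLe_infEl ⟨_, 0, hζ, rfl⟩ (by rintro _ ⟨γ, hγ, rfl⟩; exact hb γ hγ)

theorem hp_limsupEl (hζ₀ : 0 < ζ) (hζ : ζ < ω₁) (hf : ∀ ξ h, Hp σ (f ξ h)) :
    Hp σ (limsupEl σ ζ f) := by
  refine hp_infEl ⟨_, 0, hζ₀, rfl⟩ ?_
  rintro _ ⟨γ, hγ, rfl⟩
  exact hp_supEl (countable_tail hζ f) ⟨f γ hγ, γ, hγ, le_rfl, rfl⟩
    (by rintro _ ⟨ξ, hξ, -, rfl⟩; exact hf ξ hξ)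

end Tail

section LimsupContinuous

variable {σ : Ty} {F : Ordinal → El σ} {ζ : Ordinal} {a : Ordinal → Ordinal}

theorem hpLe_supEl_tail_of_le_sSup
    (hmono : ∀ β α, β ≤ α → α < ω₁ → HpLe σ (F β) (F α))
    (hlim : ∀ β, Order.IsSuccLimit β → F β = limsupEl σ β fun η _ => F η)
    (hζ : ζ < ω₁) (ha : ∀ ξ < ζ, a ξ < ω₁) {γ β : Ordinal} (hγ : γ < ζ)
    (hβ : β ≤ sSup (a '' Set.Ico γ ζ)) :
    HpLe σ (F β) (supEl σ (tail σ ζ γ fun ξ _ => F (a ξ))) := by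
  have hne : (a '' Set.Ico γ ζ).Nonempty := ⟨a γ, γ, ⟨le_rfl, hγ⟩, rfl⟩
  have hbdd : BddAbove (a '' Set.Ico γ ζ) := ⟨ω₁, by rintro _ ⟨ξ, hξ, rfl⟩; exact (ha ξ hξ.2).le⟩
  have below_term : ∀ η, ∀ ξ ∈ Set.Ico γ ζ, η ≤ a ξ →
      HpLe σ (F η) (supEl σ (tail σ ζ γ fun ξ _ => F (a ξ))) := fun η ξ hξ hle =>
    (hmono η (a ξ) hle (ha ξ hξ.2)).trans (hpLe_supEl (countable_tail hζ _) ⟨ξ, hξ.2, hξ.1, rfl⟩)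
  by_cases hattained : ∃ ξ ∈ Set.Ico γ ζ, β ≤ a ξ
  · obtain ⟨ξ, hξ, hle⟩ := hattained
    exact below_term β ξ hξ hle
  push Not at hattained
  have hβ_eq : β = sSup (a '' Set.Ico γ ζ) :=
    hβ.antisymm (csSup_le hne (by rintro _ ⟨ξ, hξ, rfl⟩; exact (hattained ξ hξ).le))
  have hβ_lim : Order.IsSuccLimit β := by
    by_contra hnot
    obtain ⟨ξ, hξ, hξβ⟩ :=
      csSup_mem_of_not_isSuccLimit hne hbdd (hβ_eq ▸ hnot)
    exact (hattained ξ hξ).ne (hξβ.trans hβ_eq.symm)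
  rw [hlim β hβ_lim]
  refine (limsupEl_le_supEl_tail hβ_lim.pos).hpLe.trans (supEl_hpLe ?_)
  rintro _ ⟨η, hη, -, rfl⟩
  obtain ⟨_, ⟨ξ, hξ, rfl⟩, hηξ⟩ := exists_lt_of_lt_csSup hne (hβ_eq ▸ hη)
  exact below_term η ξ hξ hηξ.le

theorem limsupEl_hpEq_supEl_tail
    (hmono : ∀ β α, β ≤ α → α < ω₁ → HpLe σ (F β) (F α))
    (hlim : ∀ β, Order.IsSuccLimit β → F β = limsupEl σ β fun η _ => F η)
    (hζ : ζ < ω₁) (ha : ∀ ξ < ζ, a ξ < ω₁) {μ : Ordinal} (hμ : μ < ζ)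
    (hsup : oLimsup ζ a = sSup (a '' Set.Ico μ ζ)) :
    HpEq σ (limsupEl σ ζ fun ξ _ => F (a ξ)) (supEl σ (tail σ ζ μ fun ξ _ => F (a ξ))) := by
  refine ⟨(limsupEl_le_supEl_tail hμ).hpLe, hpLe_limsupEl (pos_of_gt hμ) fun γ hγ => ?_⟩
  refine supEl_hpLe ?_
  rintro _ ⟨ξ, hξ, hμξ, rfl⟩
  refine hpLe_supEl_tail_of_le_sSup hmono hlim hζ ha hγ ?_
  have hbdd : BddAbove (a '' Set.Ico μ ζ) := ⟨ω₁, by rintro _ ⟨η, hη, rfl⟩; exact (ha η hη.2).le⟩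
  calc a ξ ≤ sSup (a '' Set.Ico μ ζ) := le_csSup hbdd ⟨ξ, ⟨hμξ, hξ⟩, rfl⟩
    _ = oLimsup ζ a := hsup.symm
    _ ≤ sSup (a '' Set.Ico γ ζ) := csInf_le (OrderBot.bddBelow _) ⟨γ, hγ, rfl⟩

end LimsupContinuous

section Iter

theorem Iter_zero (σ : Ty) (f : El σ → El σ) (x : El σ) : Iter σ 0 f x = x := by
  rw [Iter, Ordinal.limitRecOn_zero]

theorem Iter_succ (σ : Ty) (α : Ordinal) (f : El σ → El σ) (x : El σ) :
    Iter σ (α + 1) f x = f (Iter σ α f x) := by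
  rw [Iter, Ordinal.limitRecOn_add_one]
  rfl

theorem Iter_limit (σ : Ty) {α : Ordinal} (h : Order.IsSuccLimit α) (f : El σ → El σ)
    (x : El σ) : Iter σ α f x = limsupEl σ α fun ξ _ => Iter σ ξ f x := by
  rw [Iter, Ordinal.limitRecOn_limit _ _ _ _ h]
  rfl

variable {σ : Ty} {f : El σ → El σ} {x : El σ}

theorem hp_iter (hf : Hp (.arrow σ σ) f) (hx : Hp σ x) {α : Ordinal} (hα : α < ω₁) :
    Hp σ (Iter σ α f x) := by
  induction α using Ordinal.limitRecOn with
  | zero => rwa [Iter_zero]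
  | add_one α ih =>
    rw [Iter_succ]
    exact (hp_arrow.1 hf).1 _ (ih ((lt_add_one α).trans hα))
  | limit α hlim ih =>
    rw [Iter_limit σ hlim]
    exact hp_limsupEl hlim.pos hα fun ξ hξ => ih ξ hξ (hξ.trans hα)

theorem iter_hpLe_iter (hf : Hp (.arrow σ σ) f) (hx : Hp σ x) {β α : Ordinal} (hβα : β ≤ α)
    (hα : α < ω₁) : HpLe σ (Iter σ β f x) (Iter σ α f x) := by
  induction α using Ordinal.limitRecOn with
  | zero =>
    rw [nonpos_iff_eq_zero.1 hβα]
    exact HpLe.refl _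
  | add_one α ih =>
    rcases hβα.eq_or_lt with rfl | hβα
    · exact HpLe.refl _
    have hα' : α < ω₁ := (lt_add_one α).trans hα
    rw [Iter_succ]
    exact (ih (Order.lt_add_one_iff.1 hβα) hα').trans ((hp_arrow.1 hf).2.1 _ (hp_iter hf hx hα'))
  | limit α hlim ih =>
    rcases hβα.eq_or_lt with rfl | hβα
    · exact HpLe.refl _
    rw [Iter_limit σ hlim]
    refine hpLe_limsupEl hlim.pos fun γ hγ => ?_
    have hmax : max γ β < α := max_lt hγ hβα
    exact (ih _ hmax (le_max_right γ β) (hmax.trans hα)).trans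
      (hpLe_supEl (countable_tail hα _) ⟨max γ β, hmax, le_max_left γ β, rfl⟩)

end Iter

theorem limsup_iter_hpEq_sup_iter_general (σ : Ty) (ζ : Ordinal) (hζ : ζ < ω₁)
    (a : Ordinal → Ordinal) (ha : ∀ ξ, ξ < ζ → a ξ < ω₁)
    (μ : Ordinal) (hμ : μ < ζ)
    (hsup : oLimsup ζ a = sSup (a '' {ξ | μ ≤ ξ ∧ ξ < ζ})) :
    HpEq (.arrow (.arrow σ σ) (.arrow σ σ))
      (limsupEl (.arrow (.arrow σ σ) (.arrow σ σ)) ζ (fun ξ _ => Iter σ (a ξ)))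
      (supEl (.arrow (.arrow σ σ) (.arrow σ σ))
        {g | ∃ ξ, ∃ _ : ξ < ζ, μ ≤ ξ ∧ g = Iter σ (a ξ)}) := by
  refine hpEq_arrow.2 fun f hf => hpEq_arrow.2 fun x hx => ?_
  change HpEq σ _ (supEl (.arrow (.arrow σ σ) (.arrow σ σ)) (tail _ ζ μ fun ξ _ => Iter σ (a ξ)) f x)
  rw [limsupEl_apply, limsupEl_apply, supEl_tail_apply, supEl_tail_apply]
  exact limsupEl_hpEq_supEl_tail (fun β α hβα hα => iter_hpLe_iter hf hx hβα hα)
    (fun β hβ => Iter_limit σ hβ f x) hζ ha hμ hsup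

/-- For any finite type `σ` and any sequence of countable ordinals
`(α_ξ)_{ξ<ζ}` with `ζ ≥ 1` countable, if `μ < ζ` is such that
`limsup_{ξ→ζ} α_ξ = sup_{μ≤ξ<ζ} α_ξ`, then
`limsup_{ξ→ζ} Iter_{α_ξ}^σ =hp sup_{μ≤ξ<ζ} Iter_{α_ξ}^σ`. -/
theorem limsup_iter_hpEq_sup_iter (σ : Ty) (ζ : Ordinal) (hζ1 : 1 ≤ ζ) (hζ : ζ < ω₁)
    (a : Ordinal → Ordinal) (ha : ∀ ξ, ξ < ζ → a ξ < ω₁)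
    (μ : Ordinal) (hμ : μ < ζ)
    (hsup : oLimsup ζ a = sSup (a '' {ξ | μ ≤ ξ ∧ ξ < ζ})) :
    HpEq (.arrow (.arrow σ σ) (.arrow σ σ))
      (limsupEl (.arrow (.arrow σ σ) (.arrow σ σ)) ζ (fun ξ _ => Iter σ (a ξ)))
      (supEl (.arrow (.arrow σ σ) (.arrow σ σ))
        {g | ∃ ξ, ∃ _ : ξ < ζ, μ ≤ ξ ∧ g = Iter σ (a ξ)}) :=
  limsup_iter_hpEq_sup_iter_general σ ζ hζ a ha μ hμ hsup

end IterOrd
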